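/- arXiv:2602.12007 — 2 statements merged into one kernel-verified Lean document; each statement's English description precedes it below -/
import Mathlib

section
/- With Ω, u, and k as above (k ≥ 2 an integer): for every p with 1 ≤ p < k + 2, the integral ∫_Ω |∇u|^p is finite; in fact ∫_Ω |∇u|^p ≲ ∫₀¹ z^{k+1-p} dz < ∞. Consequently u ∈ W^{1,p}(Ω) for all p ∈ [1, k+2). -/
open Set MeasureTheory

/-- The condition `(x,y) ∈ V_z`, where
`V_z = B((-2z,0),z) ∪ ((-2z,2z) × (0,z^k)) ∪ B((2z,0),z)`. -/
def memVz (k : ℕ) (x y z : ℝ) : Prop :=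
  ((x + 2*z)^2 + y^2 < z^2) ∨ (-2*z < x ∧ x < 2*z ∧ 0 < y ∧ y < z^k) ∨
    ((x - 2*z)^2 + y^2 < z^2)

/-- The domain `Ω ⊂ ℝ³`. -/
def Omg (k : ℕ) : Set (EuclideanSpace ℝ (Fin 3)) :=
  {q | 0 < q 2 ∧ q 2 < 1 ∧ memVz k (q 0) (q 1) (q 2)}

open Real

local notation "E3" => EuclideanSpace ℝ (Fin 3)

lemma abs_coord_le (v : E3) (i : Fin 3) : |v i| ≤ ‖v‖ := by
  rw [EuclideanSpace.norm_eq, ← Real.sqrt_sq_eq_abs]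
  apply Real.sqrt_le_sqrt
  have := Finset.single_le_sum (f := fun j => ‖v j‖ ^ 2)
    (fun j _ => sq_nonneg _) (Finset.mem_univ i)
  simpa [Real.norm_eq_abs, sq_abs] using this

lemma norm_proj_le (i : Fin 3) :
    ‖(EuclideanSpace.proj i : E3 →L[ℝ] ℝ)‖ ≤ 1 :=
  ContinuousLinearMap.opNorm_le_bound _ zero_le_one fun v => by
    simpa [Real.norm_eq_abs] using abs_coord_le v i

lemma coord_continuous (i : Fin 3) : Continuous (fun r : E3 => r i) :=
  (EuclideanSpace.proj (i : Fin 3) : E3 →L[ℝ] ℝ).continuous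

lemma hasFDerivAt_u (ψ : ℝ → ℝ) (hψ : ContDiff ℝ (⊤ : ℕ∞) ψ) (q : E3) (hz : q 2 ≠ 0) :
    HasFDerivAt (fun r : E3 => ψ (r 0 / r 2))
      (deriv ψ (q 0 / q 2) •
        (q 0 • ((-((q 2) ^ 2)⁻¹) • (EuclideanSpace.proj 2 : E3 →L[ℝ] ℝ))
          + (q 2)⁻¹ • (EuclideanSpace.proj 0 : E3 →L[ℝ] ℝ))) q := by
  have h0 : HasFDerivAt (fun r : E3 => r 0) (EuclideanSpace.proj 0 : E3 →L[ℝ] ℝ) q :=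
    (EuclideanSpace.proj (0 : Fin 3) : E3 →L[ℝ] ℝ).hasFDerivAt
  have h2 : HasFDerivAt (fun r : E3 => r 2) (EuclideanSpace.proj 2 : E3 →L[ℝ] ℝ) q :=
    (EuclideanSpace.proj (2 : Fin 3) : E3 →L[ℝ] ℝ).hasFDerivAt
  have hinv : HasFDerivAt (fun r : E3 => (r 2)⁻¹)
      ((-((q 2) ^ 2)⁻¹) • (EuclideanSpace.proj 2 : E3 →L[ℝ] ℝ)) q :=
    (hasDerivAt_inv hz).comp_hasFDerivAt q h2
  have hmul := h0.mul hinv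
  have hψ' : HasDerivAt ψ (deriv ψ (q 0 * (q 2)⁻¹)) (q 0 * (q 2)⁻¹) :=
    ((hψ.differentiable (by simp)) _).hasDerivAt
  have hc := hψ'.comp_hasFDerivAt q hmul
  simp only [Function.comp_def, div_eq_mul_inv] at hc ⊢
  exact hc

lemma fderiv_u_lo (ψ : ℝ → ℝ) (hone : ∀ t < (1:ℝ)/2, ψ t = 1) (q : E3)
    (hz : 0 < q 2) (hlt : q 0 / q 2 < 1/2) :
    fderiv ℝ (fun r : E3 => ψ (r 0 / r 2)) q = 0 := by
  have hU : IsOpen {r : E3 | 0 < r 2 ∧ 2 * r 0 < r 2} :=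
    (isOpen_lt continuous_const (coord_continuous 2)).inter
      (isOpen_lt (continuous_const.mul (coord_continuous 0)) (coord_continuous 2))
  have hq : q ∈ {r : E3 | 0 < r 2 ∧ 2 * r 0 < r 2} := by
    refine ⟨hz, ?_⟩
    rw [div_lt_iff₀ hz] at hlt; linarith
  have heq : (fun r : E3 => ψ (r 0 / r 2)) =ᶠ[nhds q] (fun _ => (1:ℝ)) :=
    Filter.eventuallyEq_of_mem (hU.mem_nhds hq) fun r hr => by
      refine hone _ ?_
      rw [div_lt_iff₀ hr.1]; linarith [hr.2]
  rw [heq.fderiv_eq, fderiv_const_apply]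

lemma fderiv_u_hi (ψ : ℝ → ℝ) (hzero : ∀ t ≥ (3:ℝ)/4, ψ t = 0) (q : E3)
    (hz : 0 < q 2) (hgt : 3/4 < q 0 / q 2) :
    fderiv ℝ (fun r : E3 => ψ (r 0 / r 2)) q = 0 := by
  have hU : IsOpen {r : E3 | 0 < r 2 ∧ 3 * r 2 < 4 * r 0} :=
    (isOpen_lt continuous_const (coord_continuous 2)).inter
      (isOpen_lt (continuous_const.mul (coord_continuous 2))
        (continuous_const.mul (coord_continuous 0)))
  have hq : q ∈ {r : E3 | 0 < r 2 ∧ 3 * r 2 < 4 * r 0} := by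
    refine ⟨hz, ?_⟩
    rw [lt_div_iff₀ hz] at hgt; linarith
  have heq : (fun r : E3 => ψ (r 0 / r 2)) =ᶠ[nhds q] (fun _ => (0:ℝ)) :=
    Filter.eventuallyEq_of_mem (hU.mem_nhds hq) fun r hr => by
      refine hzero _ ?_
      rw [ge_iff_le, le_div_iff₀ hr.1]; linarith [hr.2]
  rw [heq.fderiv_eq, fderiv_const_apply]

lemma integrable_indicator_rpow {e : ℝ} (he : e < 1) :
    Integrable ((Ioo (0:ℝ) 1).indicator fun t => t ^ (-e)) := by
  have h : IntervalIntegrable (fun t : ℝ => t ^ (-e)) volume 0 1 :=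
    intervalIntegral.intervalIntegrable_rpow' (by linarith)
  have h2 : IntegrableOn (fun t : ℝ => t ^ (-e)) (Ioo (0:ℝ) 1) volume := by
    have := (intervalIntegrable_iff_integrableOn_Ioc_of_le zero_le_one).mp h
    exact this.mono_set Ioo_subset_Ioc_self
  exact h2.integrable_indicator measurableSet_Ioo

lemma omg_isOpen (k : ℕ) : IsOpen (Omg k) := by
  have c0 := coord_continuous 0
  have c1 := coord_continuous 1
  have c2 := coord_continuous 2
  have h : Omg k = ({r : E3 | 0 < r 2} ∩ {r : E3 | r 2 < 1}) ∩
      ({r : E3 | (r 0 + 2*r 2)^2 + (r 1)^2 < (r 2)^2} ∪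
        (({r : E3 | -(2*r 2) < r 0} ∩ {r : E3 | r 0 < 2*r 2}) ∩
          ({r : E3 | 0 < r 1} ∩ {r : E3 | r 1 < (r 2)^k})) ∪
        {r : E3 | (r 0 - 2*r 2)^2 + (r 1)^2 < (r 2)^2}) := by
    ext r
    simp only [Omg, memVz, mem_setOf_eq, mem_inter_iff, mem_union, neg_mul]
    tauto
  rw [h]
  refine (((isOpen_lt continuous_const c2).inter (isOpen_lt c2 continuous_const)).inter
    (((isOpen_lt (((c0.add (continuous_const.mul c2)).pow 2).add (c1.pow 2)) (c2.pow 2)).union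
      (((isOpen_lt (continuous_const.mul c2).neg c0).inter
          (isOpen_lt c0 (continuous_const.mul c2))).inter
        ((isOpen_lt continuous_const c1).inter (isOpen_lt c1 (c2.pow k))))).union
      (isOpen_lt (((c0.sub (continuous_const.mul c2)).pow 2).add (c1.pow 2)) (c2.pow 2))))

lemma omg_subset_ball (k : ℕ) : Omg k ⊆ Metric.closedBall (0 : E3) 4 := by
  rintro q ⟨hz, hz1, hV⟩
  have hzk1 : q 2 ^ k ≤ 1 := pow_le_one₀ hz.le hz1.le
  have hx : (q 0)^2 ≤ 9 ∧ (q 1)^2 ≤ 1 := by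
    rcases hV with h | h | h
    · obtain ⟨h1, h2⟩ := abs_lt_of_sq_lt_sq'
        (show (q 0 + 2 * q 2)^2 < (q 2)^2 by nlinarith [sq_nonneg (q 1)]) hz.le
      constructor <;> nlinarith [sq_nonneg (q 0 + 2 * q 2)]
    · obtain ⟨h1, h2, h3, h4⟩ := h
      constructor <;> nlinarith
    · obtain ⟨h1, h2⟩ := abs_lt_of_sq_lt_sq'
        (show (q 0 - 2 * q 2)^2 < (q 2)^2 by nlinarith [sq_nonneg (q 1)]) hz.le
      constructor <;> nlinarith [sq_nonneg (q 0 - 2 * q 2)]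
  have hnorm : ‖q‖ ≤ 4 := by
    rw [EuclideanSpace.norm_eq]
    have h16 : Real.sqrt 16 = 4 := by
      rw [show (16:ℝ) = 4^2 by norm_num, Real.sqrt_sq (by norm_num)]
    rw [← h16]
    apply Real.sqrt_le_sqrt
    rw [Fin.sum_univ_three]
    simp only [Real.norm_eq_abs, sq_abs]
    nlinarith [hx.1, hx.2]
  simpa [Metric.mem_closedBall, dist_zero_right] using hnorm

set_option maxHeartbeats 2000000 in
set_option synthInstance.maxHeartbeats 1000000 in
theorem stmt1 (ψ : ℝ → ℝ) (hψ : ContDiff ℝ (⊤ : ℕ∞) ψ) (hmono : Antitone ψ)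
    (hrange : ∀ t, ψ t ∈ Icc (0:ℝ) 1)
    (hone : ∀ t < (1:ℝ)/2, ψ t = 1) (hzero : ∀ t ≥ (3:ℝ)/4, ψ t = 0)
    (k : ℕ) (hk : 2 ≤ k) (p : ℝ) (hp1 : 1 ≤ p) (hpk : p < k + 2) :
    -- the gradient is `p`-integrable on `Ω` …
    IntegrableOn
      (fun q : EuclideanSpace ℝ (Fin 3) =>
        ‖fderiv ℝ (fun r : EuclideanSpace ℝ (Fin 3) => ψ (r 0 / r 2)) q‖ ^ p)
      (Omg k) volume ∧
    -- … with the quantitative bound `∫_Ω |∇u|^p ≲ ∫₀¹ z^{k+1-p} dz < ∞` …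
    (∃ C : ℝ, 0 ≤ C ∧
      ∫ q in Omg k,
          ‖fderiv ℝ (fun r : EuclideanSpace ℝ (Fin 3) => ψ (r 0 / r 2)) q‖ ^ p
            ∂volume
        ≤ C * ∫ z in Ioo (0:ℝ) 1, z ^ ((k:ℝ) + 1 - p) ∧
      IntegrableOn (fun z : ℝ => z ^ ((k:ℝ) + 1 - p)) (Ioo (0:ℝ) 1) volume) ∧
    -- … and `u` itself is `p`-integrable on `Ω`, so that `u ∈ W^{1,p}(Ω)`.
    IntegrableOn
      (fun q : EuclideanSpace ℝ (Fin 3) => |ψ (q 0 / q 2)| ^ p) (Omg k) volume := by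
  have hp0 : (0:ℝ) ≤ p := zero_le_one.trans hp1
  have hk2 : (2:ℝ) ≤ (k:ℝ) := by exact_mod_cast hk
  have hk0 : (0:ℝ) < (k:ℝ) := by linarith
  have hΩmeas : MeasurableSet (Omg k) := (omg_isOpen k).measurableSet
  -- the function whose integrability we study
  set f : E3 → ℝ :=
    fun q => ‖fderiv ℝ (fun r : E3 => ψ (r 0 / r 2)) q‖ ^ p with hf_def
  -- bound on the derivative of ψ
  obtain ⟨M0, hM0⟩ := (isCompact_Icc (a := (1:ℝ)/2) (b := 3/4)).exists_bound_of_continuousOn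
    ((hψ.continuous_deriv (by simp)).continuousOn)
  set M : ℝ := max M0 1 with hM_def
  have hM1 : (1:ℝ) ≤ M := le_max_right _ _
  have hM0' : (0:ℝ) ≤ M := zero_le_one.trans hM1
  set K : ℝ := (2*M) ^ p with hK_def
  have hK0 : 0 ≤ K := Real.rpow_nonneg (by linarith) _
  -- the exponents
  set a : ℝ := max 0 ((p + 2 - (k:ℝ))/4) with ha_def
  set b : ℝ := p - 2*a with hb_def
  have ha0 : 0 ≤ a := le_max_left _ _
  have ha1 : a < 1 := max_lt zero_lt_one (by linarith)
  have hb0 : 0 ≤ b := by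
    rcases le_or_gt ((p + 2 - (k:ℝ))/4) 0 with h | h
    · have ha : a = 0 := max_eq_left h
      rw [hb_def, ha]; linarith
    · have ha : a = (p + 2 - (k:ℝ))/4 := max_eq_right h.le
      rw [hb_def, ha]; linarith
  have hbk : b < (k:ℝ) := by
    rcases le_or_gt ((p + 2 - (k:ℝ))/4) 0 with h | h
    · have ha : a = 0 := max_eq_left h
      rw [hb_def, ha]; linarith
    · have ha : a = (p + 2 - (k:ℝ))/4 := max_eq_right h.le
      rw [hb_def, ha]; linarith
  -- the dominating function
  set g : Fin 3 → ℝ → ℝ :=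
    ![(Ioo (0:ℝ) 1).indicator fun t => t ^ (-a),
      (Ioo (0:ℝ) 1).indicator fun t => t ^ (-(b/(k:ℝ))),
      (Ioo (0:ℝ) 1).indicator fun t => t ^ (-a)] with hg_def
  have hg : ∀ i, Integrable (g i) := by
    intro i
    fin_cases i
    · exact integrable_indicator_rpow ha1
    · exact integrable_indicator_rpow ((div_lt_one hk0).mpr hbk)
    · exact integrable_indicator_rpow ha1
  have hgnn : ∀ i t, 0 ≤ g i t := by
    intro i t
    have hind : ∀ (e : ℝ), 0 ≤ (Ioo (0:ℝ) 1).indicator (fun s => s ^ e) t :=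
      fun e => Set.indicator_nonneg (fun s hs => Real.rpow_nonneg hs.1.le e) t
    fin_cases i <;> simpa [hg_def] using hind _
  set H : E3 → ℝ := fun q => K * ∏ i, g i (q i) with hH_def
  have hH0 : ∀ q : E3, 0 ≤ H q := fun q =>
    mul_nonneg hK0 (Finset.prod_nonneg fun i _ => hgnn i _)
  -- integrability of the dominating function, by Fubini
  have hprod : Integrable (fun x : Fin 3 → ℝ => ∏ i, g i (x i)) :=
    Integrable.fin_nat_prod hg
  have hEprod : Integrable (fun q : E3 => ∏ i, g i (q i)) :=
    (((MeasurePreserving.symm _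
        (EuclideanSpace.volume_preserving_symm_measurableEquiv_toLp (ι := Fin 3))).integrable_comp_emb
      (MeasurableEquiv.measurableEmbedding _))).mp hprod
  have hHint : Integrable H := hEprod.const_mul K
  -- pointwise bound
  have hpt : ∀ q ∈ Omg k, ‖f q‖ ≤ H q := by
    rintro q ⟨hz, hz1, hV⟩
    rcases lt_or_ge (q 0 / q 2) (1/2) with hlt | h12
    · rw [hf_def]
      simp only [fderiv_u_lo ψ hone q hz hlt, norm_zero,
        Real.zero_rpow (by linarith : p ≠ 0), norm_zero]
      exact hH0 q
    rcases lt_or_ge (3/4 : ℝ) (q 0 / q 2) with hgt | h34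
    · rw [hf_def]
      simp only [fderiv_u_hi ψ hzero q hz hgt, norm_zero,
        Real.zero_rpow (by linarith : p ≠ 0), norm_zero]
      exact hH0 q
    -- main case
    have hx2 : q 2 / 2 ≤ q 0 := by
      rw [le_div_iff₀ hz] at h12; linarith
    have hx34 : q 0 ≤ 3/4 * q 2 := by
      rw [div_le_iff₀ hz] at h34; linarith
    have hx0 : 0 < q 0 := lt_of_lt_of_le (by linarith) hx2
    have hxz : q 0 ≤ q 2 := by linarith
    have hx1 : q 0 < 1 := by linarith
    -- the point is in the strip
    obtain ⟨hy0, hyk⟩ : 0 < q 1 ∧ q 1 < q 2 ^ k := by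
      rcases hV with h | h | h
      · exfalso; nlinarith [sq_nonneg (q 1)]
      · exact ⟨h.2.2.1, h.2.2.2⟩
      · exfalso; nlinarith [sq_nonneg (q 1)]
    have hy1 : q 1 < 1 := hyk.trans_le (pow_le_one₀ hz.le hz1.le)
    -- derivative bound
    have hd := hasFDerivAt_u ψ hψ q (ne_of_gt hz)
    have hfe := hd.fderiv
    have hMd : |deriv ψ (q 0 / q 2)| ≤ M := by
      have := hM0 (q 0 / q 2) ⟨h12, h34⟩
      rw [Real.norm_eq_abs] at this
      exact this.trans (le_max_left _ _)
    have hnorm : ‖fderiv ℝ (fun r : E3 => ψ (r 0 / r 2)) q‖ ≤ 2 * M / q 2 := by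
      rw [hfe]
      apply ContinuousLinearMap.opNorm_le_bound _ (by positivity)
      intro v
      have hv2 := abs_coord_le v 2
      have hv0 := abs_coord_le v 0
      have hvn : (0:ℝ) ≤ ‖v‖ := norm_nonneg v
      have happ : (deriv ψ (q 0 / q 2) •
          (q 0 • ((-((q 2) ^ 2)⁻¹) • (EuclideanSpace.proj 2 : E3 →L[ℝ] ℝ))
            + (q 2)⁻¹ • (EuclideanSpace.proj 0 : E3 →L[ℝ] ℝ))) v
          = deriv ψ (q 0 / q 2) *
            (q 0 * (-((q 2) ^ 2)⁻¹ * v 2) + (q 2)⁻¹ * v 0) := by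
        simp only [ContinuousLinearMap.smul_apply, ContinuousLinearMap.add_apply,
          ContinuousLinearMap.neg_apply, PiLp.proj_apply, smul_eq_mul]
      rw [happ, Real.norm_eq_abs]
      have hB : |q 0 * (-((q 2)^2)⁻¹ * v 2) + (q 2)⁻¹ * v 0| ≤ 2 / q 2 * ‖v‖ := by
        have ha2 : |q 0 * (-((q 2)^2)⁻¹ * v 2)| = q 0 * (((q 2)^2)⁻¹ * |v 2|) := by
          rw [abs_mul, abs_mul, abs_neg,
            abs_of_pos (by positivity : (0:ℝ) < ((q 2)^2)⁻¹), abs_of_pos hx0]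
        have ha0 : |(q 2)⁻¹ * v 0| = (q 2)⁻¹ * |v 0| := by
          rw [abs_mul, abs_of_pos (by positivity : (0:ℝ) < (q 2)⁻¹)]
        calc |q 0 * (-((q 2)^2)⁻¹ * v 2) + (q 2)⁻¹ * v 0|
            ≤ |q 0 * (-((q 2)^2)⁻¹ * v 2)| + |(q 2)⁻¹ * v 0| := abs_add_le _ _
          _ = q 0 * (((q 2)^2)⁻¹ * |v 2|) + (q 2)⁻¹ * |v 0| := by rw [ha2, ha0]
          _ ≤ q 2 * (((q 2)^2)⁻¹ * ‖v‖) + (q 2)⁻¹ * ‖v‖ := by gcongr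
          _ = 2 / q 2 * ‖v‖ := by field_simp; ring
      calc |deriv ψ (q 0 / q 2) * (q 0 * (-((q 2)^2)⁻¹ * v 2) + (q 2)⁻¹ * v 0)|
          = |deriv ψ (q 0 / q 2)| * |q 0 * (-((q 2)^2)⁻¹ * v 2) + (q 2)⁻¹ * v 0| :=
            abs_mul _ _
        _ ≤ M * (2 / q 2 * ‖v‖) := mul_le_mul hMd hB (abs_nonneg _) hM0'
        _ = 2 * M / q 2 * ‖v‖ := by ring
    -- rpow chain
    have step1 : f q ≤ (2*M/q 2) ^ p :=
      Real.rpow_le_rpow (norm_nonneg _) hnorm hp0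
    have step2 : (2*M/q 2) ^ p = K * (q 2) ^ (-p) := by
      rw [Real.div_rpow (by linarith) hz.le, Real.rpow_neg hz.le, div_eq_mul_inv]
    have step3 : (q 2) ^ (-p) = (q 2)^(-a) * (q 2)^(-b) * (q 2)^(-a) := by
      rw [← Real.rpow_add hz, ← Real.rpow_add hz]
      congr 1
      rw [hb_def]; ring
    have step4 : (q 2)^(-a) ≤ (q 0)^(-a) :=
      Real.rpow_le_rpow_of_nonpos hx0 hxz (neg_nonpos.mpr ha0)
    have step5 : (q 2)^(-b) ≤ (q 1)^(-(b/(k:ℝ))) := by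
      have hzk : (q 2) ^ (-b) = ((q 2) ^ k) ^ (-(b / (k:ℝ))) := by
        rw [← Real.rpow_natCast (q 2) k, ← Real.rpow_mul hz.le]
        congr 1
        field_simp
      rw [hzk]
      exact Real.rpow_le_rpow_of_nonpos hy0 hyk.le
        (neg_nonpos.mpr (div_nonneg hb0 hk0.le))
    have hHq : H q = K * ((q 0)^(-a) * (q 1)^(-(b/(k:ℝ))) * (q 2)^(-a)) := by
      rw [hH_def]
      simp only [hg_def, Fin.prod_univ_three, Matrix.cons_val_zero, Matrix.cons_val_one,
        Matrix.head_cons, Matrix.cons_val_two, Matrix.tail_cons]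
      have hmem0 : q 0 ∈ Ioo (0:ℝ) 1 := ⟨hx0, hx1⟩
      have hmem1 : q 1 ∈ Ioo (0:ℝ) 1 := ⟨hy0, hy1⟩
      have hmem2 : q 2 ∈ Ioo (0:ℝ) 1 := ⟨hz, hz1⟩
      rw [Set.indicator_of_mem hmem0, Set.indicator_of_mem hmem1,
        Set.indicator_of_mem hmem2]
    have hfq0 : 0 ≤ f q := Real.rpow_nonneg (norm_nonneg _) p
    rw [Real.norm_eq_abs, abs_of_nonneg hfq0]
    calc f q ≤ (2*M/q 2) ^ p := step1
      _ = K * ((q 2)^(-a) * (q 2)^(-b) * (q 2)^(-a)) := by rw [step2, step3]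
      _ ≤ K * ((q 0)^(-a) * (q 1)^(-(b/(k:ℝ))) * (q 2)^(-a)) := by
          apply mul_le_mul_of_nonneg_left ?_ hK0
          apply mul_le_mul (mul_le_mul step4 step5 (by positivity) (by positivity))
            le_rfl (by positivity) (by positivity)
      _ = H q := hHq.symm
  -- measurability of f
  have hfmeas : Measurable f := by
    have h1 : Measurable (fderiv ℝ (fun r : E3 => ψ (r 0 / r 2))) :=
      measurable_fderiv ℝ _
    have h2 : Continuous fun t : ℝ => t ^ p :=
      continuous_id.rpow_const fun _ => Or.inr hp0
    exact h2.measurable.comp h1.norm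
  -- first conjunct
  have hint1 : IntegrableOn f (Omg k) volume := by
    refine (hHint.integrableOn).mono' (hfmeas.aestronglyMeasurable.restrict) ?_
    exact (ae_restrict_iff' hΩmeas).2 (ae_of_all _ hpt)
  refine ⟨hint1, ?_, ?_⟩
  · -- quantitative bound
    have hexp : (-1:ℝ) < (k:ℝ) + 1 - p := by linarith
    have hIint : IntegrableOn (fun z : ℝ => z ^ ((k:ℝ) + 1 - p)) (Ioo (0:ℝ) 1) volume := by
      have := integrable_indicator_rpow (e := -((k:ℝ) + 1 - p)) (by linarith)
      rw [neg_neg] at this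
      exact (integrable_indicator_iff measurableSet_Ioo).mp this
    have hIval : ∫ z in Ioo (0:ℝ) 1, z ^ ((k:ℝ) + 1 - p)
        = 1 / ((k:ℝ) + 1 - p + 1) := by
      rw [← MeasureTheory.integral_Ioc_eq_integral_Ioo,
        ← intervalIntegral.integral_of_le zero_le_one,
        integral_rpow (Or.inl hexp)]
      rw [Real.one_rpow, Real.zero_rpow (by linarith : ((k:ℝ) + 1 - p + 1) ≠ 0)]
      ring
    have hIpos : 0 < ∫ z in Ioo (0:ℝ) 1, z ^ ((k:ℝ) + 1 - p) := by
      rw [hIval]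
      apply div_pos one_pos
      linarith
    have hJ0 : 0 ≤ ∫ q in Omg k, f q ∂volume :=
      setIntegral_nonneg hΩmeas fun q _ => Real.rpow_nonneg (norm_nonneg _) p
    refine ⟨(∫ q in Omg k, f q ∂volume) / (∫ z in Ioo (0:ℝ) 1, z ^ ((k:ℝ) + 1 - p)),
      div_nonneg hJ0 hIpos.le, le_of_eq (div_mul_cancel₀ _ hIpos.ne').symm, hIint⟩
  · -- u itself is p-integrable
    have hΩfin : volume (Omg k) < ⊤ :=
      lt_of_le_of_lt (measure_mono (omg_subset_ball k)) (measure_closedBall_lt_top)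
    have hmeas3 : Measurable fun q : E3 => |ψ (q 0 / q 2)| ^ p := by
      have hmdiv : Measurable fun q : E3 => q 0 / q 2 :=
        ((coord_continuous 0).measurable).div ((coord_continuous 2).measurable)
      have hcont : Continuous fun t : ℝ => |ψ t| ^ p :=
        (hψ.continuous.abs).rpow_const fun _ => Or.inr hp0
      exact hcont.measurable.comp hmdiv
    refine Integrable.mono' (g := fun _ => (1:ℝ))
      ((integrableOn_const_iff (C := (1:ℝ))).mpr (Or.inr hΩfin)) (hmeas3.aestronglyMeasurable.restrict) ?_
    refine ae_of_all _ fun q => ?_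
    rw [Real.norm_eq_abs, abs_of_nonneg (Real.rpow_nonneg (abs_nonneg _) _)]
    exact Real.rpow_le_one (abs_nonneg _)
      (abs_le.mpr ⟨by linarith [(hrange (q 0 / q 2)).1], (hrange (q 0 / q 2)).2⟩) hp0
end

section
/- Let E ⊂ ℝⁿ be a closed set with empty interior such that almost every line segment meets E in finitely many points. Let ρ : V → ℝ be a continuous function on an open convex set V, differentiable on V \ E with |D_x ρ| ≤ L for all x ∈ V \ E. Then ρ is L-Lipschitz on V. -/
open Set Metric MeasureTheory

/-- One-dimensional mean value inequality allowing a finite exceptional set. -/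
lemma key1d (M : ℝ) (hM : 0 ≤ M) (g : ℝ → ℝ) (S : Set ℝ) (hS : S.Finite) :
    ∀ x y : ℝ, x ≤ y → ContinuousOn g (Icc x y) →
    (∀ t ∈ Ioo x y, t ∉ S → DifferentiableAt ℝ g t ∧ |deriv g t| ≤ M) →
    |g y - g x| ≤ M * (y - x) := by
  clear hM
  induction S, hS using Set.Finite.induction_on with
  | empty =>
    intro x y hxy hc hd
    have hdiff : DifferentiableOn ℝ g (interior (Icc x y)) := by
      rw [interior_Icc]
      intro t ht
      exact ((hd t ht (notMem_empty t)).1).differentiableWithinAt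
    have hderiv_le : ∀ t ∈ interior (Icc x y), deriv g t ≤ M := by
      rw [interior_Icc]
      intro t ht
      exact (abs_le.1 (hd t ht (notMem_empty t)).2).2
    have hderiv_ge : ∀ t ∈ interior (Icc x y), -M ≤ deriv g t := by
      rw [interior_Icc]
      intro t ht
      exact (abs_le.1 (hd t ht (notMem_empty t)).2).1
    have h1 := (convex_Icc x y).image_sub_le_mul_sub_of_deriv_le hc hdiff hderiv_le
      x (left_mem_Icc.2 hxy) y (right_mem_Icc.2 hxy) hxy
    have h2 := (convex_Icc x y).mul_sub_le_image_sub_of_le_deriv hc hdiff hderiv_ge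
      x (left_mem_Icc.2 hxy) y (right_mem_Icc.2 hxy) hxy
    rw [abs_le]
    constructor <;> nlinarith
  | @insert a s _ _ ih =>
    intro x y hxy hc hd
    by_cases haxy : a ∈ Ioo x y
    · -- split at `a`
      have hxa : x ≤ a := le_of_lt haxy.1
      have hay : a ≤ y := le_of_lt haxy.2
      have h1 : |g a - g x| ≤ M * (a - x) := by
        refine ih x a hxa (hc.mono (Icc_subset_Icc le_rfl hay)) ?_
        intro t ht hts
        refine hd t ⟨ht.1, ht.2.trans haxy.2⟩ ?_
        simp only [mem_insert_iff, not_or]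
        exact ⟨ne_of_lt ht.2, hts⟩
      have h2 : |g y - g a| ≤ M * (y - a) := by
        refine ih a y hay (hc.mono (Icc_subset_Icc hxa le_rfl)) ?_
        intro t ht hts
        refine hd t ⟨haxy.1.trans ht.1, ht.2⟩ ?_
        simp only [mem_insert_iff, not_or]
        exact ⟨(ne_of_lt ht.1).symm, hts⟩
      calc |g y - g x| ≤ |g y - g a| + |g a - g x| := abs_sub_le _ _ _
        _ ≤ M * (y - a) + M * (a - x) := add_le_add h2 h1
        _ = M * (y - x) := by ring
    · refine ih x y hxy hc ?_
      intro t ht hts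
      refine hd t ht ?_
      simp only [mem_insert_iff, not_or]
      exact ⟨fun h => haxy (h ▸ ht), hts⟩

/-- A continuous function on an open convex set, differentiable with derivative bounded
by `L` off a closed set `E` with empty interior that almost every segment meets in
finitely many points, is `L`-Lipschitz. -/
theorem stmt8 {n : ℕ} (E V : Set (EuclideanSpace ℝ (Fin n)))
    (hE : IsClosed E) (hEint : interior E = ∅)
    (hseg : ∀ᵐ q : EuclideanSpace ℝ (Fin n) × EuclideanSpace ℝ (Fin n)
      ∂(volume.prod volume), (segment ℝ q.1 q.2 ∩ E).Finite)
    (hV : IsOpen V) (hconv : Convex ℝ V)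
    (ρ : EuclideanSpace ℝ (Fin n) → ℝ) (hρc : ContinuousOn ρ V)
    (L : ℝ) (hL : 0 ≤ L)
    (hdiff : ∀ x ∈ V \ E, DifferentiableAt ℝ ρ x ∧ ‖fderiv ℝ ρ x‖ ≤ L) :
    ∀ a ∈ V, ∀ b ∈ V, |ρ a - ρ b| ≤ L * dist a b := by
  classical
  -- Step A : density of "good" pairs
  have hGdense : ∀ (p q : EuclideanSpace ℝ (Fin n)) (δ : ℝ), 0 < δ →
      ∃ p' q' : EuclideanSpace ℝ (Fin n), dist p' p < δ ∧ dist q' q < δ ∧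
        (segment ℝ p' q' ∩ E).Finite := by
    intro p q δ hδ
    by_contra hcon
    push_neg at hcon
    have hB : (volume.prod volume) {x : EuclideanSpace ℝ (Fin n) × EuclideanSpace ℝ (Fin n) |
        ¬ (segment ℝ x.1 x.2 ∩ E).Finite} = 0 := by
      simpa [ae_iff] using hseg
    have hsub : (ball p δ ×ˢ ball q δ : Set (EuclideanSpace ℝ (Fin n) × EuclideanSpace ℝ (Fin n)))
        ⊆ {x | ¬ (segment ℝ x.1 x.2 ∩ E).Finite} := by
      rintro ⟨p', q'⟩ ⟨hp', hq'⟩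
      exact hcon p' q' (mem_ball.1 hp') (mem_ball.1 hq')
    have hU : (volume.prod volume) (ball p δ ×ˢ ball q δ) = 0 :=
      le_antisymm (le_trans (measure_mono hsub) hB.le) zero_le
    rw [Measure.prod_prod] at hU
    have h1 : volume (ball p δ) ≠ 0 := (measure_ball_pos volume p hδ).ne'
    have h2 : volume (ball q δ) ≠ 0 := (measure_ball_pos volume q hδ).ne'
    exact (mul_ne_zero h1 h2) hU
  -- Step B : the estimate along a good segment
  have key : ∀ a' ∈ V, ∀ b' ∈ V, (segment ℝ a' b' ∩ E).Finite →
      |ρ a' - ρ b'| ≤ L * dist a' b' := by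
    intro a' ha' b' hb' hfin
    rcases eq_or_ne a' b' with rfl | hne
    · simp [mul_nonneg hL dist_nonneg]
    set v : EuclideanSpace ℝ (Fin n) := b' - a' with hv
    have hvne : v ≠ 0 := sub_ne_zero.2 hne.symm
    set γ : ℝ → EuclideanSpace ℝ (Fin n) := fun t => a' + t • v with hγ
    have γcont : Continuous γ := by fun_prop
    have γinj : Function.Injective γ := by
      intro s t hst
      have h1 : s • v = t • v := by
        have := hst
        simpa [hγ, add_right_inj] using this
      have h2 : (s - t) • v = 0 := by rw [sub_smul, h1, sub_self]
      rcases smul_eq_zero.1 h2 with h | h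
      · exact sub_eq_zero.1 h
      · exact absurd h hvne
    have hseg_im : γ '' Icc (0:ℝ) 1 = segment ℝ a' b' := (segment_eq_image' ℝ a' b').symm
    have hsegV : segment ℝ a' b' ⊆ V := hconv.segment_subset ha' hb'
    have hmemseg : ∀ t ∈ Icc (0:ℝ) 1, γ t ∈ segment ℝ a' b' := by
      intro t ht
      rw [← hseg_im]
      exact mem_image_of_mem γ ht
    set S : Set ℝ := Icc (0:ℝ) 1 ∩ γ ⁻¹' E with hSdef
    have hSfin : S.Finite := by
      have : S ⊆ γ ⁻¹' (segment ℝ a' b' ∩ E) := by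
        rintro t ⟨ht1, ht2⟩
        exact ⟨hmemseg t ht1, ht2⟩
      exact (hfin.preimage γinj.injOn).subset this
    set g : ℝ → ℝ := fun t => ρ (γ t) with hg
    have hgc : ContinuousOn g (Icc 0 1) :=
      hρc.comp γcont.continuousOn (fun t ht => hsegV (hmemseg t ht))
    have hd : ∀ t ∈ Ioo (0:ℝ) 1, t ∉ S →
        DifferentiableAt ℝ g t ∧ |deriv g t| ≤ L * ‖v‖ := by
      intro t ht htS
      have htI : t ∈ Icc (0:ℝ) 1 := Ioo_subset_Icc_self ht
      have hγtE : γ t ∉ E := fun h => htS ⟨htI, h⟩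
      have hγtV : γ t ∈ V := hsegV (hmemseg t htI)
      obtain ⟨hdρ, hbound⟩ := hdiff (γ t) ⟨hγtV, hγtE⟩
      have hγd : HasDerivAt γ v t := by
        have h1 : HasDerivAt (fun s : ℝ => s • v) ((1:ℝ) • v) t :=
          (hasDerivAt_id t).smul_const v
        simpa [hγ, one_smul] using h1.const_add a'
      have hgd : HasDerivAt g (fderiv ℝ ρ (γ t) v) t :=
        hdρ.hasFDerivAt.comp_hasDerivAt t hγd
      refine ⟨hgd.differentiableAt, ?_⟩
      rw [hgd.deriv]
      calc |fderiv ℝ ρ (γ t) v| = ‖fderiv ℝ ρ (γ t) v‖ := (Real.norm_eq_abs _).symm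
        _ ≤ ‖fderiv ℝ ρ (γ t)‖ * ‖v‖ := (fderiv ℝ ρ (γ t)).le_opNorm v
        _ ≤ L * ‖v‖ := mul_le_mul_of_nonneg_right hbound (norm_nonneg v)
    have := key1d (L * ‖v‖) (mul_nonneg hL (norm_nonneg v)) g S hSfin 0 1 zero_le_one hgc hd
    have hg1 : g 1 = ρ b' := by simp [hg, hγ, hv]
    have hg0 : g 0 = ρ a' := by simp [hg, hγ]
    have hdist : dist a' b' = ‖v‖ := by
      rw [dist_eq_norm, hv, ← norm_neg]
      congr 1
      abel
    rw [hg1, hg0] at this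
    rw [abs_sub_comm, hdist]
    linarith
  -- Step C : approximation argument
  intro a ha b hb
  refine le_of_forall_pos_le_add ?_
  intro ε hε
  have hca : ContinuousAt ρ a := hρc.continuousAt (hV.mem_nhds ha)
  have hcb : ContinuousAt ρ b := hρc.continuousAt (hV.mem_nhds hb)
  obtain ⟨δ₁, hδ₁, hδ₁'⟩ := Metric.continuousAt_iff.1 hca (ε/4) (by linarith)
  obtain ⟨δ₂, hδ₂, hδ₂'⟩ := Metric.continuousAt_iff.1 hcb (ε/4) (by linarith)
  obtain ⟨δ₃, hδ₃, hδ₃'⟩ := Metric.isOpen_iff.1 hV a ha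
  obtain ⟨δ₄, hδ₄, hδ₄'⟩ := Metric.isOpen_iff.1 hV b hb
  set δ : ℝ := min (min δ₁ δ₂) (min (min δ₃ δ₄) (ε / (4 * (L + 1)))) with hδdef
  have hδpos : 0 < δ := by
    refine lt_min (lt_min hδ₁ hδ₂) (lt_min (lt_min hδ₃ hδ₄) ?_)
    positivity
  obtain ⟨a', b', haa', hbb', hfin⟩ := hGdense a b δ hδpos
  have hle1 : δ ≤ δ₁ := le_trans (min_le_left _ _) (min_le_left _ _)
  have hle2 : δ ≤ δ₂ := le_trans (min_le_left _ _) (min_le_right _ _)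
  have hle3 : δ ≤ δ₃ := le_trans (min_le_right _ _) (le_trans (min_le_left _ _) (min_le_left _ _))
  have hle4 : δ ≤ δ₄ := le_trans (min_le_right _ _) (le_trans (min_le_left _ _) (min_le_right _ _))
  have hle5 : δ ≤ ε / (4 * (L + 1)) := le_trans (min_le_right _ _) (min_le_right _ _)
  have ha'V : a' ∈ V := hδ₃' (mem_ball.2 (lt_of_lt_of_le haa' hle3))
  have hb'V : b' ∈ V := hδ₄' (mem_ball.2 (lt_of_lt_of_le hbb' hle4))
  have h1 : |ρ a' - ρ a| < ε/4 := by
    have := hδ₁' (show dist a' a < δ₁ from lt_of_lt_of_le haa' hle1)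
    rwa [Real.dist_eq] at this
  have h2 : |ρ b' - ρ b| < ε/4 := by
    have := hδ₂' (show dist b' b < δ₂ from lt_of_lt_of_le hbb' hle2)
    rwa [Real.dist_eq] at this
  have h3 : |ρ a' - ρ b'| ≤ L * dist a' b' := key a' ha'V b' hb'V hfin
  have h4 : dist a' b' ≤ dist a b + 2 * δ := by
    calc dist a' b' ≤ dist a' a + dist a b + dist b b' := dist_triangle4 a' a b b'
      _ ≤ δ + dist a b + δ := by
          have := dist_comm b b' ▸ hbb'
          linarith [haa', hbb']
      _ = dist a b + 2 * δ := by ring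
  have h5 : L * dist a' b' ≤ L * dist a b + 2 * L * δ := by nlinarith [hδpos.le]
  have h6 : 2 * L * δ ≤ ε / 2 := by
    have hLd : L / (L + 1) ≤ 1 := by
      rw [div_le_one (by linarith)]; linarith
    have : 2 * L * δ ≤ 2 * L * (ε / (4 * (L + 1))) := by nlinarith [hδpos.le]
    calc 2 * L * δ ≤ 2 * L * (ε / (4 * (L + 1))) := this
      _ = (L / (L + 1)) * (ε / 2) := by field_simp; ring
      _ ≤ 1 * (ε / 2) := by nlinarith [hε.le]
      _ = ε / 2 := one_mul _
  calc |ρ a - ρ b| ≤ |ρ a - ρ a'| + |ρ a' - ρ b'| + |ρ b' - ρ b| := dist_triangle4 (ρ a) (ρ a') (ρ b') (ρ b)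
    _ ≤ ε/4 + (L * dist a b + 2 * L * δ) + ε/4 := by
        rw [abs_sub_comm (ρ a) (ρ a')]
        linarith [h3.trans h5]
    _ ≤ L * dist a b + ε := by linarith
end
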